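/- arXiv:2603.27678 — 6 statements merged into one kernel-verified Lean document; each statement's English description precedes it below -/
import Mathlib

section
/- Let W be a closed convex subset of a real inner product space, let F : W's ambient space → ℝ be convex on W, let η > 0, and let x ∈ W. Suppose x⁺ ∈ W minimizes the regularized objective, i.e., for all w ∈ W, F(x⁺) + (1/(2η))‖x⁺ − x‖² ≤ F(w) + (1/(2η))‖w − x‖². Then for every u ∈ W, F(x⁺) − F(u) ≤ (1/(2η)) (‖u − x‖² − ‖u − x⁺‖² − ‖x⁺ − x‖²). -/
/-! Moving from the minimizer `x⁺` a fraction `t` of the way towards `u` and using convexity of `F`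
gives `F x⁺ - F u ≤ (1/η) ⟪x⁺ - x, u - x⁺⟫ + O(t)`; letting `t → 0⁺` leaves the first-order
optimality condition, and the polarization identity
`‖u - x‖² - ‖u - x⁺‖² - ‖x⁺ - x‖² = 2 ⟪x⁺ - x, u - x⁺⟫` turns it into the three-point form. -/

open Set Filter Topology

theorem le_of_forall_mem_Ioc_le_add_mul {a b K : ℝ} (h : ∀ t ∈ Ioc (0 : ℝ) 1, a ≤ b + t * K) :
    a ≤ b := by
  have hlim : Tendsto (fun t : ℝ => b + t * K) (𝓝[>] 0) (𝓝 b) :=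
    ((continuous_const.add (continuous_id.mul continuous_const)).tendsto' 0 b (by simp)).mono_left
      nhdsWithin_le_nhds
  exact ge_of_tendsto hlim
    (mem_of_superset (Ioo_mem_nhdsGT one_pos) fun t ht => h t (Ioo_subset_Ioc_self ht))

section InnerProductSpace

variable {E : Type*} [NormedAddCommGroup E] [InnerProductSpace ℝ E]

theorem norm_add_smul_sq_real (v d : E) (t : ℝ) :
    ‖v + t • d‖ ^ 2 = ‖v‖ ^ 2 + 2 * t * inner ℝ v d + t ^ 2 * ‖d‖ ^ 2 := by
  rw [norm_add_sq_real, real_inner_smul_right, norm_smul, mul_pow, Real.norm_eq_abs, sq_abs]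
  ring

theorem norm_sub_sq_sub_norm_sub_sq_sub_norm_sub_sq (u x y : E) :
    ‖u - x‖ ^ 2 - ‖u - y‖ ^ 2 - ‖y - x‖ ^ 2 = 2 * inner ℝ (y - x) (u - y) := by
  rw [← sub_add_sub_cancel u y x, norm_add_sq_real, real_inner_comm]
  ring

theorem ConvexOn.sub_le_of_isMinOn_add_mul_norm_sub_sq {W : Set E} {F : E → ℝ}
    (hF : ConvexOn ℝ W F) {c : ℝ} {x y u : E}
    (hmin : IsMinOn (fun w => F w + c * ‖w - x‖ ^ 2) W y) (hy : y ∈ W) (hu : u ∈ W) :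
    F y - F u ≤ 2 * c * inner ℝ (y - x) (u - y) := by
  refine le_of_forall_mem_Ioc_le_add_mul (K := c * ‖u - y‖ ^ 2) fun t ⟨ht0, ht1⟩ => ?_
  have hseg : (1 - t) • y + t • u = y + t • (u - y) := by module
  have hconv : F (y + t • (u - y)) ≤ (1 - t) * F y + t * F u := by
    simpa [hseg] using hF.2 hy hu (sub_nonneg.2 ht1) ht0.le (by ring)
  have hopt := isMinOn_iff.1 hmin _ (hseg ▸ hF.1 hy hu (sub_nonneg.2 ht1) ht0.le (by ring))
  have hdist : ‖y + t • (u - y) - x‖ ^ 2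
      = ‖y - x‖ ^ 2 + 2 * t * inner ℝ (y - x) (u - y) + t ^ 2 * ‖u - y‖ ^ 2 := by
    rw [add_sub_right_comm, norm_add_smul_sq_real]
  simp only [hdist] at hopt
  refine le_of_mul_le_mul_left ?_ ht0
  linarith

end InnerProductSpace

theorem proximal_three_point_inequality_general
    {E : Type*} [NormedAddCommGroup E] [InnerProductSpace ℝ E]
    (W : Set E)
    (F : E → ℝ) (hF : ConvexOn ℝ W F)
    (η : ℝ)
    (x : E)
    (xp : E) (hxp : xp ∈ W)
    (hmin : ∀ w ∈ W, F xp + (1 / (2 * η)) * ‖xp - x‖ ^ 2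
      ≤ F w + (1 / (2 * η)) * ‖w - x‖ ^ 2) :
    ∀ u ∈ W, F xp - F u
      ≤ (1 / (2 * η)) * (‖u - x‖ ^ 2 - ‖u - xp‖ ^ 2 - ‖xp - x‖ ^ 2) := by
  intro u hu
  rw [norm_sub_sq_sub_norm_sub_sq_sub_norm_sub_sq, ← mul_assoc, mul_comm _ (2 : ℝ)]
  exact hF.sub_le_of_isMinOn_add_mul_norm_sub_sq (isMinOn_iff.2 hmin) hxp hu

/-- Proximal three-point inequality: if `x⁺ ∈ W` minimizes
`w ↦ F w + (1/(2η)) ‖w - x‖²` over a closed convex set `W`, then for all `u ∈ W`,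
`F x⁺ - F u ≤ (1/(2η)) (‖u - x‖² - ‖u - x⁺‖² - ‖x⁺ - x‖²)`. -/
theorem proximal_three_point_inequality
    {E : Type*} [NormedAddCommGroup E] [InnerProductSpace ℝ E]
    (W : Set E) (hWclosed : IsClosed W) (hWconv : Convex ℝ W)
    (F : E → ℝ) (hF : ConvexOn ℝ W F)
    (η : ℝ) (hη : 0 < η)
    (x : E) (hx : x ∈ W)
    (xp : E) (hxp : xp ∈ W)
    (hmin : ∀ w ∈ W, F xp + (1 / (2 * η)) * ‖xp - x‖ ^ 2
      ≤ F w + (1 / (2 * η)) * ‖w - x‖ ^ 2) :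
    ∀ u ∈ W, F xp - F u
      ≤ (1 / (2 * η)) * (‖u - x‖ ^ 2 - ‖u - xp‖ ^ 2 - ‖xp - x‖ ^ 2) :=
  proximal_three_point_inequality_general W F hF η x xp hxp hmin
end

section
/- Let W be a nonempty closed convex subset of ℝ^d with diameter at most D, let η > 0, let F_1, …, F_T be convex real-valued functions, let w_0 ∈ W, and for each t let w_t ∈ W be a minimizer over W of w ↦ F_t(w) + (1/(2η))‖w − w_{t−1}‖². For each t let w_t⋆ ∈ W be a minimizer of F_t over W. Then Σ_{t=1}^{T} (F_t(w_t) − F_t(w_t⋆)) ≤ (1/(2η))‖w_1⋆ − w_0‖² + (D/η) Σ_{t=2}^{T} ‖w_t⋆ − w_{t−1}⋆‖. -/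
/-!
The proximal step `w_t` minimizes the `1/η`-strongly convex function
`F_t + ‖· - w_{t-1}‖² / (2η)`, so against any comparator `v ∈ W` the three-point inequality gives
`F_t(w_t) - F_t(v) ≤ (‖v - w_{t-1}‖² - ‖v - w_t‖²) / (2η)`. With `v = w_t⋆` the right-hand sides
telescope up to the drift: replacing `w_t⋆` by `w_{t-1}⋆` in `‖w_t⋆ - w_{t-1}‖²` costs at most
`2D ‖w_t⋆ - w_{t-1}⋆‖`, because all points involved lie in `W`.
-/

open Filter Finset RealInnerProductSpace Topology

section Prox

variable {E : Type*} [NormedAddCommGroup E] [InnerProductSpace ℝ E]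
  {W : Set E} {F : E → ℝ} {c : ℝ} {u m v : E}

theorem ConvexOn.le_add_inner_of_isMinOn_add_sq (hF : ConvexOn ℝ W F)
    (hmin : IsMinOn (fun x => F x + c * ‖x - u‖ ^ 2) W m) (hm : m ∈ W) (hv : v ∈ W) :
    F m ≤ F v + 2 * c * ⟪m - u, v - m⟫ := by
  set I := ⟪m - u, v - m⟫
  set N := ‖v - m‖ ^ 2
  -- Compare `m` with the points `m + l (v - m)` of the segment and let `l → 0⁺`.
  have hsegment : ∀ l ∈ Set.Ioc (0 : ℝ) 1, F m ≤ F v + 2 * c * I + l * (c * N) := by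
    rintro l ⟨hl0, hl1⟩
    have hmem : (1 - l) • m + l • v ∈ W := hF.1 hm hv (by linarith) hl0.le (by ring)
    have hconv : F ((1 - l) • m + l • v) ≤ (1 - l) * F m + l * F v :=
      hF.2 hm hv (by linarith) hl0.le (by ring)
    have hexpand : ‖(1 - l) • m + l • v - u‖ ^ 2 = ‖m - u‖ ^ 2 + 2 * l * I + l ^ 2 * N := by
      rw [show (1 - l) • m + l • v - u = (m - u) + l • (v - m) by module, norm_add_sq_real,
        real_inner_smul_right, norm_smul, Real.norm_of_nonneg hl0.le]
      ring
    have hopt := isMinOn_iff.1 hmin _ hmem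
    simp only [hexpand] at hopt
    have : l * F m ≤ l * (F v + 2 * c * I + l * (c * N)) := by linarith
    exact le_of_mul_le_mul_left this hl0
  have hlim : Tendsto (fun l : ℝ => F v + 2 * c * I + l * (c * N)) (𝓝[>] 0)
      (𝓝 (F v + 2 * c * I)) := by
    have := ((continuous_mul_const (c * N)).tendsto' 0 0 (zero_mul _)).const_add (F v + 2 * c * I)
    simpa using this.mono_left nhdsWithin_le_nhds
  exact ge_of_tendsto hlim (eventually_of_mem (Ioc_mem_nhdsGT one_pos) hsegment)

theorem ConvexOn.three_point_of_isMinOn_add_sq (hF : ConvexOn ℝ W F)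
    (hmin : IsMinOn (fun x => F x + c * ‖x - u‖ ^ 2) W m) (hm : m ∈ W) (hv : v ∈ W) :
    F m + c * ‖m - u‖ ^ 2 + c * ‖v - m‖ ^ 2 ≤ F v + c * ‖v - u‖ ^ 2 := by
  have hfirst := hF.le_add_inner_of_isMinOn_add_sq hmin hm hv
  have hexpand : ‖v - u‖ ^ 2 = ‖v - m‖ ^ 2 + 2 * ⟪m - u, v - m⟫ + ‖m - u‖ ^ 2 := by
    rw [show v - u = (v - m) + (m - u) by abel, norm_add_sq_real, real_inner_comm]
  rw [hexpand]
  linarith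

end Prox

theorem norm_sub_sq_sub_norm_sub_sq_le {E : Type*} [SeminormedAddCommGroup E] {a b p : E} {D : ℝ}
    (ha : ‖a - p‖ ≤ D) (hb : ‖b - p‖ ≤ D) :
    ‖a - p‖ ^ 2 - ‖b - p‖ ^ 2 ≤ 2 * D * ‖a - b‖ := by
  have htri : ‖a - p‖ ≤ ‖a - b‖ + ‖b - p‖ := norm_sub_le_norm_sub_add_norm_sub a b p
  nlinarith [norm_nonneg (a - p), norm_nonneg (b - p), norm_nonneg (a - b)]

theorem sum_Icc_sub_le_of_le_add (A B s : ℕ → ℝ) {T : ℕ} (hT : 1 ≤ T)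
    (hstep : ∀ t ∈ Icc 2 T, A t ≤ B (t - 1) + s t) :
    ∑ t ∈ Icc 1 T, (A t - B t) ≤ A 1 - B T + ∑ t ∈ Icc 2 T, s t := by
  induction T, hT using Nat.le_induction with
  | base => simp
  | succ T hT ih =>
    have hprev := ih fun t ht => hstep t (Icc_subset_Icc_right T.le_succ ht)
    have hlast : A (T + 1) ≤ B T + s (T + 1) := by
      simpa using hstep (T + 1) (mem_Icc.2 ⟨by omega, le_rfl⟩)
    rw [sum_Icc_succ_top (by omega), sum_Icc_succ_top (by omega)]
    linarith

theorem dynamic_regret_vs_per_round_minimizers_general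
    {d : ℕ} (W : Set (EuclideanSpace ℝ (Fin d)))
    (hWconv : Convex ℝ W)
    (D : ℝ) (hD : ∀ w ∈ W, ∀ w' ∈ W, ‖w - w'‖ ≤ D)
    (η : ℝ) (hη : 0 < η)
    (T : ℕ)
    (F : ℕ → EuclideanSpace ℝ (Fin d) → ℝ)
    (hF : ∀ t ∈ Finset.Icc 1 T, ConvexOn ℝ Set.univ (F t))
    (w : ℕ → EuclideanSpace ℝ (Fin d))
    (hwmem : ∀ t ∈ Finset.Icc 1 T, w t ∈ W)
    (hwopt : ∀ t ∈ Finset.Icc 1 T, ∀ v ∈ W,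
      F t (w t) + (1 / (2 * η)) * ‖w t - w (t - 1)‖ ^ 2
        ≤ F t v + (1 / (2 * η)) * ‖v - w (t - 1)‖ ^ 2)
    (wstar : ℕ → EuclideanSpace ℝ (Fin d))
    (hwstarmem : ∀ t ∈ Finset.Icc 1 T, wstar t ∈ W) :
    ∑ t ∈ Finset.Icc 1 T, (F t (w t) - F t (wstar t))
      ≤ (1 / (2 * η)) * ‖wstar 1 - w 0‖ ^ 2
        + (D / η) * ∑ t ∈ Finset.Icc 2 T, ‖wstar t - wstar (t - 1)‖ := by
  set c := 1 / (2 * η)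
  have hc : 0 ≤ c := by positivity
  rcases Nat.eq_zero_or_pos T with rfl | hT
  · rw [Icc_eq_empty (by omega), Icc_eq_empty (by omega), sum_empty, sum_empty, mul_zero, add_zero]
    positivity
  have hround : ∀ t ∈ Icc 1 T, F t (w t) - F t (wstar t)
      ≤ c * ‖wstar t - w (t - 1)‖ ^ 2 - c * ‖wstar t - w t‖ ^ 2 := fun t ht => by
    have hthree := ((hF t ht).subset (Set.subset_univ W) hWconv).three_point_of_isMinOn_add_sq
      (isMinOn_iff.2 (hwopt t ht)) (hwmem t ht) (hwstarmem t ht)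
    have hmove : 0 ≤ c * ‖w t - w (t - 1)‖ ^ 2 := by positivity
    linarith
  have hdrift : ∀ t ∈ Icc 2 T, c * ‖wstar t - w (t - 1)‖ ^ 2
      ≤ c * ‖wstar (t - 1) - w (t - 1)‖ ^ 2 + D / η * ‖wstar t - wstar (t - 1)‖ := fun t ht => by
    obtain ⟨ht2, htT⟩ := mem_Icc.1 ht
    have hprev : t - 1 ∈ Icc 1 T := mem_Icc.2 ⟨by omega, by omega⟩
    have hcur : t ∈ Icc 1 T := mem_Icc.2 ⟨by omega, htT⟩
    have hdiff := mul_le_mul_of_nonneg_left (norm_sub_sq_sub_norm_sub_sq_le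
      (hD _ (hwstarmem t hcur) _ (hwmem _ hprev)) (hD _ (hwstarmem _ hprev) _ (hwmem _ hprev))) hc
    have hcD : c * (2 * D) = D / η := by simp only [c]; field_simp
    rw [← hcD]
    linarith
  calc ∑ t ∈ Icc 1 T, (F t (w t) - F t (wstar t))
      ≤ ∑ t ∈ Icc 1 T, (c * ‖wstar t - w (t - 1)‖ ^ 2 - c * ‖wstar t - w t‖ ^ 2) :=
        sum_le_sum hround
    _ ≤ c * ‖wstar 1 - w 0‖ ^ 2 - c * ‖wstar T - w T‖ ^ 2
          + ∑ t ∈ Icc 2 T, D / η * ‖wstar t - wstar (t - 1)‖ :=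
        sum_Icc_sub_le_of_le_add _ _ _ hT hdrift
    _ ≤ _ := by
        have hlast : 0 ≤ c * ‖wstar T - w T‖ ^ 2 := by positivity
        rw [← mul_sum]
        linarith

/-- Dynamic regret bound against the per-round minimizers `w_t⋆` of `F_t` over `W`. -/
theorem dynamic_regret_vs_per_round_minimizers
    {d : ℕ} (W : Set (EuclideanSpace ℝ (Fin d)))
    (hWne : W.Nonempty) (hWclosed : IsClosed W) (hWconv : Convex ℝ W)
    (D : ℝ) (hD : ∀ w ∈ W, ∀ w' ∈ W, ‖w - w'‖ ≤ D)
    (η : ℝ) (hη : 0 < η)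
    (T : ℕ)
    (F : ℕ → EuclideanSpace ℝ (Fin d) → ℝ)
    (hF : ∀ t ∈ Finset.Icc 1 T, ConvexOn ℝ Set.univ (F t))
    (w : ℕ → EuclideanSpace ℝ (Fin d))
    (hw0 : w 0 ∈ W)
    (hwmem : ∀ t ∈ Finset.Icc 1 T, w t ∈ W)
    (hwopt : ∀ t ∈ Finset.Icc 1 T, ∀ v ∈ W,
      F t (w t) + (1 / (2 * η)) * ‖w t - w (t - 1)‖ ^ 2
        ≤ F t v + (1 / (2 * η)) * ‖v - w (t - 1)‖ ^ 2)
    (wstar : ℕ → EuclideanSpace ℝ (Fin d))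
    (hwstarmem : ∀ t ∈ Finset.Icc 1 T, wstar t ∈ W)
    (hwstaropt : ∀ t ∈ Finset.Icc 1 T, ∀ v ∈ W, F t (wstar t) ≤ F t v) :
    ∑ t ∈ Finset.Icc 1 T, (F t (w t) - F t (wstar t))
      ≤ (1 / (2 * η)) * ‖wstar 1 - w 0‖ ^ 2
        + (D / η) * ∑ t ∈ Finset.Icc 2 T, ‖wstar t - wstar (t - 1)‖ :=
  dynamic_regret_vs_per_round_minimizers_general W hWconv D hD η hη T F hF w hwmem hwopt wstar
    hwstarmem
end

section
/- Let W be a nonempty closed convex subset of a real inner product space, F a convex real-valued function, η > 0, and x ∈ W. If x⁺ ∈ W minimizes w ↦ F(w) + (1/(2η))‖w − x‖² over W, then for every u ∈ W, F(x⁺) − F(u) ≤ (1/(2η)) (‖u − x‖² − ‖u − x⁺‖²). -/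
/-!
The proximal objective `G w = F w + ‖w - x‖² / (2η)` is `1/η`-strongly convex, and a strongly
convex function grows quadratically away from a minimizer over a convex set:
`G x⁺ + ‖u - x⁺‖² / (2η) ≤ G u`. Dropping the nonnegative term `‖x⁺ - x‖² / (2η)` of `G x⁺`
gives the inequality.
-/

open Filter Topology

section StrongConvexity

variable {E : Type*} [NormedAddCommGroup E] [InnerProductSpace ℝ E] {s : Set E} {f : E → ℝ}

theorem ConvexOn.strongConvexOn_add_norm_sub_sq (hf : ConvexOn ℝ s f) (c : ℝ) (x : E) :
    StrongConvexOn s (2 * c) fun w ↦ f w + c * ‖w - x‖ ^ 2 := by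
  rw [strongConvexOn_iff_convex]
  have hsplit : (fun w ↦ f w + c * ‖w - x‖ ^ 2 - 2 * c / 2 * ‖w‖ ^ 2)
      = f + ⇑((-(2 * c)) • innerₛₗ ℝ x) + fun _ ↦ c * ‖x‖ ^ 2 := by
    ext w
    simp only [Pi.add_apply, LinearMap.smul_apply, innerₛₗ_apply_apply, smul_eq_mul,
      norm_sub_sq_real, real_inner_comm x w]
    ring
  rw [hsplit]
  exact (hf.add (LinearMap.convexOn _ hf.1)).add_const _

theorem StrongConvexOn.add_le_of_isMinOn {m : ℝ} {a b : E} (hf : StrongConvexOn s m f)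
    (hmin : IsMinOn f s a) (ha : a ∈ s) (hb : b ∈ s) :
    f a + m / 2 * ‖b - a‖ ^ 2 ≤ f b := by
  set K := m / 2 * ‖b - a‖ ^ 2 with hK
  have hsegment : ∀ t ∈ Set.Ioo (0 : ℝ) 1, f a + (1 - t) * K ≤ f b := by
    rintro t ⟨ht₀, ht₁⟩
    have hcomb := hf.2 ha hb (sub_nonneg.2 ht₁.le) ht₀.le (sub_add_cancel 1 t)
    have hle := isMinOn_iff.1 hmin _
      (hf.1 ha hb (sub_nonneg.2 ht₁.le) ht₀.le (sub_add_cancel 1 t))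
    dsimp only at hcomb
    rw [smul_eq_mul, smul_eq_mul, norm_sub_rev, ← hK] at hcomb
    refine le_of_mul_le_mul_left ?_ ht₀
    linarith
  have hlim : Tendsto (fun t : ℝ ↦ f a + (1 - t) * K) (𝓝[>] 0) (𝓝 (f a + (1 - 0) * K)) :=
    ((continuous_const.sub continuous_id).mul continuous_const).const_add _
      |>.tendsto 0 |>.mono_left nhdsWithin_le_nhds
  have hnear : ∀ᶠ t in 𝓝[>] (0 : ℝ), f a + (1 - t) * K ≤ f b :=
    eventually_of_mem (Ioo_mem_nhdsGT one_pos) hsegment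
  simpa using le_of_tendsto hlim hnear

end StrongConvexity

theorem proximal_relaxed_inequality_general
    {E : Type*} [NormedAddCommGroup E] [InnerProductSpace ℝ E]
    (W : Set E)
    (F : E → ℝ) (hF : ConvexOn ℝ W F)
    (η : ℝ) (hη : 0 < η)
    (x : E)
    (xp : E) (hxp : xp ∈ W)
    (hmin : ∀ w ∈ W, F xp + (1 / (2 * η)) * ‖xp - x‖ ^ 2
      ≤ F w + (1 / (2 * η)) * ‖w - x‖ ^ 2) :
    ∀ u ∈ W, F xp - F u
      ≤ (1 / (2 * η)) * (‖u - x‖ ^ 2 - ‖u - xp‖ ^ 2) := by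
  intro u hu
  have hgrowth := (hF.strongConvexOn_add_norm_sub_sq (1 / (2 * η)) x).add_le_of_isMinOn
    (isMinOn_iff.2 hmin) hxp hu
  rw [mul_div_cancel_left₀ _ two_ne_zero] at hgrowth
  have hprox_nonneg : 0 ≤ 1 / (2 * η) * ‖xp - x‖ ^ 2 := by positivity
  linarith

/-- Relaxed proximal inequality: if `x⁺ ∈ W` minimizes
`w ↦ F w + (1/(2η)) ‖w - x‖²` over a nonempty closed convex set `W`, then for all
`u ∈ W`, `F x⁺ - F u ≤ (1/(2η)) (‖u - x‖² - ‖u - x⁺‖²)`. -/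
theorem proximal_relaxed_inequality
    {E : Type*} [NormedAddCommGroup E] [InnerProductSpace ℝ E]
    (W : Set E) (hWne : W.Nonempty) (hWclosed : IsClosed W) (hWconv : Convex ℝ W)
    (F : E → ℝ) (hF : ConvexOn ℝ W F)
    (η : ℝ) (hη : 0 < η)
    (x : E) (hx : x ∈ W)
    (xp : E) (hxp : xp ∈ W)
    (hmin : ∀ w ∈ W, F xp + (1 / (2 * η)) * ‖xp - x‖ ^ 2
      ≤ F w + (1 / (2 * η)) * ‖w - x‖ ^ 2) :
    ∀ u ∈ W, F xp - F u
      ≤ (1 / (2 * η)) * (‖u - x‖ ^ 2 - ‖u - xp‖ ^ 2) :=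
  proximal_relaxed_inequality_general W F hF η hη x xp hxp hmin
end

section
/- Let A be a real matrix such that H := AᵀA is symmetric with μI ≼ H ≼ LI, 0 < μ ≤ L, and let λ ≥ 0. For t ∈ {1, 2}, let b_t ∈ ℝ^m, c_t ∈ ℝ^{d_ℓ}, u_t∘ := H^{-1}Aᵀb_t, and u_t⋆ := (H + λI)^{-1}(Aᵀb_t + λc_t). Then ‖u_2⋆ − u_1⋆‖ ≤ (L/(μ + λ)) ‖u_2∘ − u_1∘‖ + (λ/(μ + λ)) ‖c_2 − c_1‖. -/
/-!
Since `H u∘ₜ = Aᵀbₜ`, the difference `u₂⋆ - u₁⋆` is `(H + λI)⁻¹` applied to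
`H (u₂∘ - u₁∘) + λ (c₂ - c₁)`. Coercivity, `(μ + λ)‖v‖² ≤ ⟪v, (H + λI) v⟫ ≤ ‖v‖ ‖(H + λI) v‖`,
bounds `‖(H + λI)⁻¹‖` by `1 / (μ + λ)`; since the norm of a symmetric operator is the supremum
of its Rayleigh quotient, `0 ≼ H ≼ LI` bounds `‖H‖` by `L`. The triangle inequality finishes.
-/

open Matrix
open scoped RealInnerProductSpace

theorem ContinuousLinearMap.opNorm_le_of_abs_inner_self_le {𝕜 E : Type*} [RCLike 𝕜]
    [NormedAddCommGroup E] [InnerProductSpace 𝕜 E] {T : E →L[𝕜] E}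
    (hT : (T : E →ₗ[𝕜] E).IsSymmetric) {C : ℝ} (hC : 0 ≤ C)
    (h : ∀ x, |RCLike.re (inner 𝕜 (T x) x)| ≤ C * ‖x‖ ^ 2) : ‖T‖ ≤ C := by
  rw [T.norm_eq_iSup_rayleighQuotient hT]
  refine ciSup_le fun x ↦ ?_
  rw [rayleighQuotient, reApplyInnerSelf_apply, abs_div, abs_sq]
  exact div_le_of_le_mul₀ (by positivity) hC (h x)

namespace Matrix

variable {ι : Type*} [Fintype ι] [DecidableEq ι] {M : Matrix ι ι ℝ} {α : ℝ}

theorem toEuclideanLin_apply_toEuclideanLin_inv (hM : IsUnit M.det) (v : EuclideanSpace ℝ ι) :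
    toEuclideanLin M (toEuclideanLin M⁻¹ v) = v := by
  ext i
  simp [mulVec_mulVec, mul_nonsing_inv M hM]

theorem PosSemidef.isUnit_det_of_sub_smul_one (hα : 0 < α) (h : (M - α • 1).PosSemidef) :
    IsUnit M.det := by
  have hM := (PosDef.posSemidef_add h (PosDef.one.smul hα)).isUnit
  rwa [sub_add_cancel, isUnit_iff_isUnit_det] at hM

theorem PosSemidef.inner_toEuclideanLin_nonneg (hM : M.PosSemidef) (x : EuclideanSpace ℝ ι) :
    0 ≤ ⟪toEuclideanLin M x, x⟫ :=
  (isPositive_toEuclideanLin_iff.mpr hM).inner_nonneg_left x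

theorem PosSemidef.mul_norm_sq_le_inner (h : (M - α • 1).PosSemidef) (x : EuclideanSpace ℝ ι) :
    α * ‖x‖ ^ 2 ≤ ⟪toEuclideanLin M x, x⟫ := by
  simpa only [map_sub, map_smul, toLpLin_one, LinearMap.sub_apply, LinearMap.smul_apply,
    LinearMap.id_coe, id_eq, inner_sub_left, inner_smul_left, Real.ringHom_apply,
    inner_self_eq_norm_sq_to_K, sub_nonneg] using h.inner_toEuclideanLin_nonneg x

theorem PosSemidef.inner_le_mul_norm_sq (h : (α • 1 - M).PosSemidef) (x : EuclideanSpace ℝ ι) :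
    ⟪toEuclideanLin M x, x⟫ ≤ α * ‖x‖ ^ 2 := by
  simpa only [map_sub, map_smul, toLpLin_one, LinearMap.sub_apply, LinearMap.smul_apply,
    LinearMap.id_coe, id_eq, inner_sub_left, inner_smul_left, Real.ringHom_apply,
    inner_self_eq_norm_sq_to_K, sub_nonneg] using h.inner_toEuclideanLin_nonneg x

theorem PosSemidef.norm_toEuclideanLin_le (hM : M.PosSemidef) (hα : 0 ≤ α)
    (h : (α • 1 - M).PosSemidef) (x : EuclideanSpace ℝ ι) :
    ‖toEuclideanLin M x‖ ≤ α * ‖x‖ := by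
  have hnorm : ‖toEuclideanCLM (n := ι) (𝕜 := ℝ) M‖ ≤ α :=
    ContinuousLinearMap.opNorm_le_of_abs_inner_self_le
      (isSymmetric_toEuclideanLin_iff.mpr hM.isHermitian) hα fun x ↦
        (abs_of_nonneg (hM.inner_toEuclideanLin_nonneg x)).trans_le (h.inner_le_mul_norm_sq x)
  exact (toEuclideanCLM (n := ι) (𝕜 := ℝ) M).le_of_opNorm_le hnorm x

theorem PosSemidef.mul_norm_le_norm_toEuclideanLin (h : (M - α • 1).PosSemidef)
    (x : EuclideanSpace ℝ ι) : α * ‖x‖ ≤ ‖toEuclideanLin M x‖ := by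
  rcases (norm_nonneg x).eq_or_lt with hx | hx
  · simp [← hx]
  refine le_of_mul_le_mul_right ?_ hx
  calc α * ‖x‖ * ‖x‖ = α * ‖x‖ ^ 2 := by ring
    _ ≤ ⟪toEuclideanLin M x, x⟫ := h.mul_norm_sq_le_inner x
    _ ≤ ‖toEuclideanLin M x‖ * ‖x‖ := real_inner_le_norm _ _

theorem PosSemidef.norm_toEuclideanLin_inv_le (hα : 0 < α) (h : (M - α • 1).PosSemidef)
    (v : EuclideanSpace ℝ ι) : ‖toEuclideanLin M⁻¹ v‖ ≤ ‖v‖ / α := by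
  rw [le_div_iff₀' hα]
  simpa [toEuclideanLin_apply_toEuclideanLin_inv (h.isUnit_det_of_sub_smul_one hα)] using
    h.mul_norm_le_norm_toEuclideanLin (toEuclideanLin M⁻¹ v)

end Matrix

/-- Anchor-induced contraction of the optimal step: with `H = AᵀA`, `μI ≼ H ≼ LI`,
`0 < μ ≤ L`, and `λ ≥ 0`,
`‖u₂⋆ - u₁⋆‖ ≤ (L/(μ+λ))‖u₂∘ - u₁∘‖ + (λ/(μ+λ))‖c₂ - c₁‖`. -/
theorem anchored_step_contraction
    {m dl : ℕ} (A : Matrix (Fin m) (Fin dl) ℝ)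
    (μ L lam : ℝ) (hμ : 0 < μ) (hμL : μ ≤ L) (hlam : 0 ≤ lam)
    (hlow : (Aᵀ * A - μ • (1 : Matrix (Fin dl) (Fin dl) ℝ)).PosSemidef)
    (hupp : (L • (1 : Matrix (Fin dl) (Fin dl) ℝ) - Aᵀ * A).PosSemidef)
    (b₁ b₂ : EuclideanSpace ℝ (Fin m)) (c₁ c₂ : EuclideanSpace ℝ (Fin dl)) :
    ‖Matrix.toEuclideanLin (Aᵀ * A + lam • (1 : Matrix (Fin dl) (Fin dl) ℝ))⁻¹
        (Matrix.toEuclideanLin Aᵀ b₂ + lam • c₂)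
      - Matrix.toEuclideanLin (Aᵀ * A + lam • (1 : Matrix (Fin dl) (Fin dl) ℝ))⁻¹
        (Matrix.toEuclideanLin Aᵀ b₁ + lam • c₁)‖
    ≤ (L / (μ + lam)) *
        ‖Matrix.toEuclideanLin (Aᵀ * A)⁻¹ (Matrix.toEuclideanLin Aᵀ b₂)
          - Matrix.toEuclideanLin (Aᵀ * A)⁻¹ (Matrix.toEuclideanLin Aᵀ b₁)‖
      + (lam / (μ + lam)) * ‖c₂ - c₁‖ := by
  set H := Aᵀ * A
  set x := toEuclideanLin H⁻¹ (toEuclideanLin Aᵀ b₂) - toEuclideanLin H⁻¹ (toEuclideanLin Aᵀ b₁)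
  have hH : H.PosSemidef := by simpa [H] using posSemidef_conjTranspose_mul_self A
  have hHx : toEuclideanLin H x = toEuclideanLin Aᵀ b₂ - toEuclideanLin Aᵀ b₁ := by
    simp [x, toEuclideanLin_apply_toEuclideanLin_inv (hlow.isUnit_det_of_sub_smul_one hμ)]
  have hshift : (H + lam • 1 - (μ + lam) • 1).PosSemidef := by
    rwa [add_smul, add_sub_add_right_eq_sub]
  have hdiff : toEuclideanLin (H + lam • 1)⁻¹ (toEuclideanLin Aᵀ b₂ + lam • c₂)
      - toEuclideanLin (H + lam • 1)⁻¹ (toEuclideanLin Aᵀ b₁ + lam • c₁)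
      = toEuclideanLin (H + lam • 1)⁻¹ (toEuclideanLin H x + lam • (c₂ - c₁)) := by
    rw [← map_sub, hHx]
    congr 1
    module
  rw [hdiff]
  calc _ ≤ ‖toEuclideanLin H x + lam • (c₂ - c₁)‖ / (μ + lam) :=
        hshift.norm_toEuclideanLin_inv_le (by positivity) _
    _ ≤ (L * ‖x‖ + lam * ‖c₂ - c₁‖) / (μ + lam) := by
        gcongr
        refine (norm_add_le _ _).trans (add_le_add ?_ ?_)
        · exact hH.norm_toEuclideanLin_le (hμ.le.trans hμL) hupp x
        · rw [norm_smul, Real.norm_of_nonneg hlam]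
    _ = _ := by ring
end

section
/- Let A be a real matrix such that H := AᵀA is symmetric with μI ≼ H ≼ LI, 0 < μ ≤ L, and let λ ≥ 0. For t = 1, …, T let b_t ∈ ℝ^m, c_t ∈ ℝ^{d_ℓ}, u_t∘ := H^{-1}Aᵀb_t, and u_t⋆ := (H + λI)^{-1}(Aᵀb_t + λc_t). Then the anchored path length satisfies Σ_{t=2}^{T} ‖u_t⋆ − u_{t−1}⋆‖ ≤ (L/(μ + λ)) Σ_{t=2}^{T} ‖u_t∘ − u_{t−1}∘‖ + (λ/(μ + λ)) Σ_{t=2}^{T} ‖c_t − c_{t−1}‖. -/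
open Matrix

open scoped RealInnerProductSpace

/-! With `H = AᵀA` and `K = H + λI`, the normal equations give
`K (u⋆ₜ - u⋆ₜ₋₁) = H (u∘ₜ - u∘ₜ₋₁) + λ (cₜ - cₜ₋₁)`. Pairing this with `w = u⋆ₜ - u⋆ₜ₋₁`, the
left side is at least `(μ + λ) ‖w‖²` because `H ≽ μI`, while `⟪w, H x⟫ = ⟪A w, A x⟫ ≤ L ‖w‖ ‖x‖`
because `H ≼ LI`. Dividing by `‖w‖` bounds each increment of the anchored path, and summing over
`t` gives the theorem. -/

section InnerProductSpace

variable {E F : Type*} [NormedAddCommGroup E] [InnerProductSpace ℝ E]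
  [NormedAddCommGroup F] [InnerProductSpace ℝ F]

theorem inner_map_map_le_of_norm_sq_le {a : E →ₗ[ℝ] F} {L : ℝ} (hL : 0 ≤ L)
    (ha : ∀ v, ‖a v‖ ^ 2 ≤ L * ‖v‖ ^ 2) (w x : E) : ⟪a w, a x⟫ ≤ L * (‖w‖ * ‖x‖) := by
  have hnorm : ∀ v, ‖a v‖ ≤ √L * ‖v‖ := fun v => by
    rw [← Real.sqrt_sq (norm_nonneg v), ← Real.sqrt_mul hL]
    exact Real.le_sqrt_of_sq_le (ha v)
  calc ⟪a w, a x⟫ ≤ ‖a w‖ * ‖a x‖ := real_inner_le_norm _ _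
    _ ≤ (√L * ‖w‖) * (√L * ‖x‖) :=
      mul_le_mul (hnorm w) (hnorm x) (norm_nonneg _) (by positivity)
    _ = L * (‖w‖ * ‖x‖) := by rw [mul_mul_mul_comm, Real.mul_self_sqrt hL]

variable [FiniteDimensional ℝ E] [FiniteDimensional ℝ F]

theorem norm_le_of_adjoint_apply_add_smul_eq (a : E →ₗ[ℝ] F) {μ L lam : ℝ} (hμ : 0 < μ)
    (hL : 0 ≤ L) (hlam : 0 ≤ lam) (hlow : ∀ v, μ * ‖v‖ ^ 2 ≤ ‖a v‖ ^ 2)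
    (hupp : ∀ v, ‖a v‖ ^ 2 ≤ L * ‖v‖ ^ 2) {w x y : E}
    (h : a.adjoint (a w) + lam • w = a.adjoint (a x) + lam • y) :
    ‖w‖ ≤ L / (μ + lam) * ‖x‖ + lam / (μ + lam) * ‖y‖ := by
  have hν : 0 < μ + lam := by linarith
  have key : (μ + lam) * ‖w‖ ^ 2 ≤ ‖w‖ * (L * ‖x‖ + lam * ‖y‖) :=
    calc (μ + lam) * ‖w‖ ^ 2 ≤ ‖a w‖ ^ 2 + lam * ‖w‖ ^ 2 := by linarith [hlow w]
      _ = ⟪w, a.adjoint (a w) + lam • w⟫ := by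
        rw [inner_add_right, LinearMap.adjoint_inner_right, real_inner_self_eq_norm_sq,
          real_inner_smul_right, real_inner_self_eq_norm_sq]
      _ = ⟪a w, a x⟫ + lam * ⟪w, y⟫ := by
        rw [h, inner_add_right, LinearMap.adjoint_inner_right, real_inner_smul_right]
      _ ≤ L * (‖w‖ * ‖x‖) + lam * (‖w‖ * ‖y‖) := by
        gcongr
        · exact inner_map_map_le_of_norm_sq_le hL hupp w x
        · exact real_inner_le_norm w y
      _ = ‖w‖ * (L * ‖x‖ + lam * ‖y‖) := by ring
  have hR : (μ + lam) * ‖w‖ ≤ L * ‖x‖ + lam * ‖y‖ := by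
    rcases (norm_nonneg w).eq_or_lt' with hw | hw
    · rw [hw, mul_zero]
      positivity
    · exact le_of_mul_le_mul_left (by linarith) hw
  calc ‖w‖ ≤ (L * ‖x‖ + lam * ‖y‖) / (μ + lam) := (le_div_iff₀' hν).mpr hR
    _ = L / (μ + lam) * ‖x‖ + lam / (μ + lam) * ‖y‖ := by ring

end InnerProductSpace

namespace Matrix

theorem posDef_of_posSemidef_sub_smul_one {n : Type*} [DecidableEq n] {M : Matrix n n ℝ}
    {μ : ℝ} (hμ : 0 < μ) (h : (M - μ • 1).PosSemidef) : M.PosDef := by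
  simpa using (PosDef.one.smul hμ).add_posSemidef h

variable {m n : Type*} [Fintype m] [Fintype n] [DecidableEq m] [DecidableEq n]

theorem toEuclideanLin_transpose_mul_self (A : Matrix m n ℝ) :
    toEuclideanLin (Aᵀ * A) = (toEuclideanLin A).adjoint ∘ₗ toEuclideanLin A := by
  rw [toLpLin_mul_same, ← conjTranspose_eq_transpose_of_trivial,
    toEuclideanLin_conjTranspose_eq_adjoint]

theorem PosSemidef.inner_toEuclideanLin_self_nonneg {M : Matrix n n ℝ} (hM : M.PosSemidef)
    (v : EuclideanSpace ℝ n) : 0 ≤ ⟪v, toEuclideanLin M v⟫ :=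
  (isPositive_toEuclideanLin_iff.mpr hM).re_inner_nonneg_right v

theorem inner_toEuclideanLin_transpose_mul_self (A : Matrix m n ℝ) (v : EuclideanSpace ℝ n) :
    ⟪v, toEuclideanLin (Aᵀ * A) v⟫ = ‖toEuclideanLin A v‖ ^ 2 := by
  rw [toEuclideanLin_transpose_mul_self, LinearMap.comp_apply, LinearMap.adjoint_inner_right,
    real_inner_self_eq_norm_sq]

theorem inner_toEuclideanLin_smul_one (μ : ℝ) (v : EuclideanSpace ℝ n) :
    ⟪v, toEuclideanLin (μ • 1 : Matrix n n ℝ) v⟫ = μ * ‖v‖ ^ 2 := by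
  rw [map_smul, toLpLin_one, LinearMap.smul_apply, LinearMap.id_apply, real_inner_smul_right,
    real_inner_self_eq_norm_sq]

theorem PosSemidef.mul_norm_sq_le_norm_toEuclideanLin_sq {A : Matrix m n ℝ} {μ : ℝ}
    (h : (Aᵀ * A - μ • 1).PosSemidef) (v : EuclideanSpace ℝ n) :
    μ * ‖v‖ ^ 2 ≤ ‖toEuclideanLin A v‖ ^ 2 := by
  have := h.inner_toEuclideanLin_self_nonneg v
  rw [map_sub, LinearMap.sub_apply, inner_sub_right, inner_toEuclideanLin_transpose_mul_self,
    inner_toEuclideanLin_smul_one] at this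
  linarith

theorem PosSemidef.norm_toEuclideanLin_sq_le {A : Matrix m n ℝ} {L : ℝ}
    (h : (L • 1 - Aᵀ * A).PosSemidef) (v : EuclideanSpace ℝ n) :
    ‖toEuclideanLin A v‖ ^ 2 ≤ L * ‖v‖ ^ 2 := by
  have := h.inner_toEuclideanLin_self_nonneg v
  rw [map_sub, LinearMap.sub_apply, inner_sub_right, inner_toEuclideanLin_transpose_mul_self,
    inner_toEuclideanLin_smul_one] at this
  linarith

theorem toEuclideanLin_apply_inv_apply {M : Matrix n n ℝ} (hM : IsUnit M)
    (v : EuclideanSpace ℝ n) : toEuclideanLin M (toEuclideanLin M⁻¹ v) = v := by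
  rw [← LinearMap.comp_apply, ← toLpLin_mul_same,
    mul_nonsing_inv M ((isUnit_iff_isUnit_det M).mp hM), toLpLin_one, LinearMap.id_apply]

end Matrix

section Optimum

variable {m n : Type*} [Fintype m] [Fintype n] [DecidableEq m] [DecidableEq n]

noncomputable def unanchoredOptimum (A : Matrix m n ℝ) (b : EuclideanSpace ℝ m) :
    EuclideanSpace ℝ n :=
  toEuclideanLin (Aᵀ * A)⁻¹ (toEuclideanLin Aᵀ b)

noncomputable def anchoredOptimum (A : Matrix m n ℝ) (lam : ℝ) (b : EuclideanSpace ℝ m)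
    (c : EuclideanSpace ℝ n) : EuclideanSpace ℝ n :=
  toEuclideanLin (Aᵀ * A + lam • 1)⁻¹ (toEuclideanLin Aᵀ b + lam • c)

theorem toEuclideanLin_unanchoredOptimum {A : Matrix m n ℝ} (hA : IsUnit (Aᵀ * A))
    (b : EuclideanSpace ℝ m) :
    toEuclideanLin (Aᵀ * A) (unanchoredOptimum A b) = toEuclideanLin Aᵀ b :=
  toEuclideanLin_apply_inv_apply hA _

theorem toEuclideanLin_anchoredOptimum_add_smul {A : Matrix m n ℝ} {lam : ℝ}
    (hA : IsUnit (Aᵀ * A + lam • 1)) (b : EuclideanSpace ℝ m) (c : EuclideanSpace ℝ n) :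
    toEuclideanLin (Aᵀ * A) (anchoredOptimum A lam b c) + lam • anchoredOptimum A lam b c =
      toEuclideanLin Aᵀ b + lam • c := by
  have := toEuclideanLin_apply_inv_apply hA (toEuclideanLin Aᵀ b + lam • c)
  rwa [map_add, map_smul, toLpLin_one, LinearMap.add_apply, LinearMap.smul_apply,
    LinearMap.id_apply] at this

theorem norm_anchoredOptimum_sub_le {A : Matrix m n ℝ} {μ L lam : ℝ} (hμ : 0 < μ)
    (hμL : μ ≤ L) (hlam : 0 ≤ lam) (hlow : (Aᵀ * A - μ • 1).PosSemidef)
    (hupp : (L • 1 - Aᵀ * A).PosSemidef) (b b' : EuclideanSpace ℝ m)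
    (c c' : EuclideanSpace ℝ n) :
    ‖anchoredOptimum A lam b c - anchoredOptimum A lam b' c'‖ ≤
      L / (μ + lam) * ‖unanchoredOptimum A b - unanchoredOptimum A b'‖ +
        lam / (μ + lam) * ‖c - c'‖ := by
  have hH : IsUnit (Aᵀ * A) := (posDef_of_posSemidef_sub_smul_one hμ hlow).isUnit
  have hK : IsUnit (Aᵀ * A + lam • 1) := by
    refine (posDef_of_posSemidef_sub_smul_one (add_pos_of_pos_of_nonneg hμ hlam) ?_).isUnit
    rwa [show Aᵀ * A + lam • 1 - (μ + lam) • 1 = Aᵀ * A - μ • 1 by module]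
  have hgram (v : EuclideanSpace ℝ n) :
      (toEuclideanLin A).adjoint (toEuclideanLin A v) = toEuclideanLin (Aᵀ * A) v := by
    rw [toEuclideanLin_transpose_mul_self, LinearMap.comp_apply]
  refine norm_le_of_adjoint_apply_add_smul_eq (toEuclideanLin A) hμ (hμ.le.trans hμL) hlam
    hlow.mul_norm_sq_le_norm_toEuclideanLin_sq hupp.norm_toEuclideanLin_sq_le ?_
  set u := anchoredOptimum A lam b c
  set u' := anchoredOptimum A lam b' c'
  rw [hgram, hgram]
  calc _ = (toEuclideanLin (Aᵀ * A) u + lam • u) - (toEuclideanLin (Aᵀ * A) u' + lam • u') := by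
        rw [map_sub, smul_sub]
        abel
    _ = (toEuclideanLin Aᵀ b + lam • c) - (toEuclideanLin Aᵀ b' + lam • c') := by
        rw [toEuclideanLin_anchoredOptimum_add_smul hK, toEuclideanLin_anchoredOptimum_add_smul hK]
    _ = _ := by
        rw [map_sub, smul_sub, toEuclideanLin_unanchoredOptimum hH,
          toEuclideanLin_unanchoredOptimum hH]
        abel

end Optimum

/-- Anchor-induced contraction of the optimal path length: with `H = AᵀA`,
`μI ≼ H ≼ LI`, `0 < μ ≤ L`, and `λ ≥ 0`,
`Σ_{t=2}^T ‖u_t⋆ - u_{t-1}⋆‖ ≤ (L/(μ+λ)) Σ_{t=2}^T ‖u_t∘ - u_{t-1}∘‖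
  + (λ/(μ+λ)) Σ_{t=2}^T ‖c_t - c_{t-1}‖`. -/
theorem anchored_path_length_contraction
    {m dl : ℕ} (A : Matrix (Fin m) (Fin dl) ℝ)
    (μ L lam : ℝ) (hμ : 0 < μ) (hμL : μ ≤ L) (hlam : 0 ≤ lam)
    (hlow : (Aᵀ * A - μ • (1 : Matrix (Fin dl) (Fin dl) ℝ)).PosSemidef)
    (hupp : (L • (1 : Matrix (Fin dl) (Fin dl) ℝ) - Aᵀ * A).PosSemidef)
    (T : ℕ) (b : ℕ → EuclideanSpace ℝ (Fin m)) (c : ℕ → EuclideanSpace ℝ (Fin dl)) :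
    ∑ t ∈ Finset.Icc 2 T,
        ‖Matrix.toEuclideanLin (Aᵀ * A + lam • (1 : Matrix (Fin dl) (Fin dl) ℝ))⁻¹
            (Matrix.toEuclideanLin Aᵀ (b t) + lam • c t)
          - Matrix.toEuclideanLin (Aᵀ * A + lam • (1 : Matrix (Fin dl) (Fin dl) ℝ))⁻¹
            (Matrix.toEuclideanLin Aᵀ (b (t - 1)) + lam • c (t - 1))‖
    ≤ (L / (μ + lam)) * ∑ t ∈ Finset.Icc 2 T,
          ‖Matrix.toEuclideanLin (Aᵀ * A)⁻¹ (Matrix.toEuclideanLin Aᵀ (b t))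
            - Matrix.toEuclideanLin (Aᵀ * A)⁻¹ (Matrix.toEuclideanLin Aᵀ (b (t - 1)))‖
      + (lam / (μ + lam)) * ∑ t ∈ Finset.Icc 2 T, ‖c t - c (t - 1)‖ := by
  rw [Finset.mul_sum, Finset.mul_sum, ← Finset.sum_add_distrib]
  exact Finset.sum_le_sum fun t _ =>
    norm_anchoredOptimum_sub_le hμ hμL hlam hlow hupp (b t) (b (t - 1)) (c t) (c (t - 1))
end

section
/- Let W be a nonempty closed convex subset of ℝ^d with diameter at most D, let η > 0, let F_1, …, F_T be convex real-valued functions, let w_0 ∈ W, and for each t let w_t ∈ W be a minimizer over W of w ↦ F_t(w) + (1/(2η))‖w − w_{t−1}‖². Then for every comparator sequence u_1, …, u_T ∈ W, Σ_{t=1}^{T} (F_t(w_t) − F_t(u_t)) ≤ (1/(2η))‖u_1 − w_0‖² + (1/(2η)) Σ_{t=2}^{T} (‖u_t − w_{t−1}‖² − ‖u_{t−1} − w_{t−1}‖²). -/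
/-!
The proximal step `w_t` minimises `F_t + ‖· - w_{t-1}‖² / (2η)` over a convex set, so it satisfies
the three-point inequality
`F_t(w_t) + ‖u - w_t‖² / (2η) ≤ F_t(u) + ‖u - w_{t-1}‖² / (2η)` for every `u ∈ W`: compare `w_t`
with the points `(1 - λ) w_t + λ u` of the segment towards `u` and let `λ → 0`.
Summing over `t` with `u = u_t`, the terms `‖u_t - w_t‖²` telescope against the next round's
`‖u_{t+1} - w_t‖²`, and the last one is dropped.
-/

open Finset

section ThreePoint

variable {E : Type*} [NormedAddCommGroup E] [InnerProductSpace ℝ E]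

theorem norm_smul_add_smul_sub_sq (a b c : E) (l : ℝ) :
    ‖((1 - l) • a + l • b) - c‖ ^ 2
      = (1 - l) * ‖a - c‖ ^ 2 + l * ‖b - c‖ ^ 2 - l * (1 - l) * ‖a - b‖ ^ 2 := by
  have hcomb : ((1 - l) • a + l • b) - c = (1 - l) • (a - c) + l • (b - c) := by module
  have hdiff : a - b = (a - c) - (b - c) := by abel
  rw [hcomb, hdiff]
  generalize a - c = x
  generalize b - c = y
  rw [norm_add_sq_real, norm_sub_sq_real, real_inner_smul_left, real_inner_smul_right,
    norm_smul, norm_smul, mul_pow, mul_pow, Real.norm_eq_abs, Real.norm_eq_abs, sq_abs, sq_abs]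
  ring

variable {W : Set E} {f : E → ℝ} {c : ℝ} {w₀ w v : E}

theorem prox_three_point_of_mem_Ioo (hW : Convex ℝ W) (hf : ConvexOn ℝ W f) (hw : w ∈ W)
    (hmin : ∀ x ∈ W, f w + c * ‖w - w₀‖ ^ 2 ≤ f x + c * ‖x - w₀‖ ^ 2) (hv : v ∈ W)
    {l : ℝ} (hl : l ∈ Set.Ioo 0 1) :
    f w + c * ‖w - w₀‖ ^ 2 + c * (1 - l) * ‖v - w‖ ^ 2 ≤ f v + c * ‖v - w₀‖ ^ 2 := by
  obtain ⟨hl₀, hl₁⟩ := hl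
  have hmin_seg := hmin ((1 - l) • w + l • v) (hW hw hv (by linarith) hl₀.le (by ring))
  have hf_seg : f ((1 - l) • w + l • v) ≤ (1 - l) * f w + l * f v :=
    hf.2 hw hv (by linarith) hl₀.le (by ring)
  rw [norm_smul_add_smul_sub_sq, norm_sub_rev w v] at hmin_seg
  -- after cancelling `(1 - l)` times the minimality of `w`, what remains is `l` times the claim
  have hscaled : l * (f w + c * ‖w - w₀‖ ^ 2 + c * (1 - l) * ‖v - w‖ ^ 2)
      ≤ l * (f v + c * ‖v - w₀‖ ^ 2) := by nlinarith
  exact le_of_mul_le_mul_left hscaled hl₀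

theorem prox_three_point (hW : Convex ℝ W) (hf : ConvexOn ℝ W f) (hw : w ∈ W)
    (hmin : ∀ x ∈ W, f w + c * ‖w - w₀‖ ^ 2 ≤ f x + c * ‖x - w₀‖ ^ 2) (hv : v ∈ W) :
    f w + c * ‖w - w₀‖ ^ 2 + c * ‖v - w‖ ^ 2 ≤ f v + c * ‖v - w₀‖ ^ 2 := by
  have hclosed : IsClosed {l : ℝ | f w + c * ‖w - w₀‖ ^ 2 + c * (1 - l) * ‖v - w‖ ^ 2
      ≤ f v + c * ‖v - w₀‖ ^ 2} :=
    isClosed_le (by fun_prop) continuous_const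
  have hIcc : Set.Icc (0 : ℝ) 1 ⊆ {l : ℝ | f w + c * ‖w - w₀‖ ^ 2 + c * (1 - l) * ‖v - w‖ ^ 2
      ≤ f v + c * ‖v - w₀‖ ^ 2} := by
    rw [← closure_Ioo zero_ne_one, hclosed.closure_subset_iff]
    exact fun l hl ↦ prox_three_point_of_mem_Ioo hW hf hw hmin hv hl
  simpa using hIcc ⟨le_rfl, zero_le_one⟩

end ThreePoint

theorem sum_Icc_sub_eq_telescope (a b : ℕ → ℝ) {T : ℕ} (hT : 1 ≤ T) :
    ∑ t ∈ Icc 1 T, (a t - b t) = a 1 + ∑ t ∈ Icc 2 T, (a t - b (t - 1)) - b T := by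
  induction T, hT using Nat.le_induction with
  | base => simp
  | succ T hT ih =>
    rw [sum_Icc_succ_top (by omega), sum_Icc_succ_top (by omega), ih, Nat.add_sub_cancel]
    ring

theorem sum_Icc_sub_le_telescope {a b : ℕ → ℝ} {T : ℕ} (ha : 0 ≤ a 1) (hb : 0 ≤ b T) :
    ∑ t ∈ Icc 1 T, (a t - b t) ≤ a 1 + ∑ t ∈ Icc 2 T, (a t - b (t - 1)) := by
  rcases Nat.eq_zero_or_pos T with rfl | hT
  · simpa using ha
  · rw [sum_Icc_sub_eq_telescope a b hT]
    linarith

theorem dynamic_regret_sq_dist_form_general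
    {d : ℕ} (W : Set (EuclideanSpace ℝ (Fin d)))
    (hWconv : Convex ℝ W)
    (η : ℝ) (hη : 0 < η)
    (T : ℕ)
    (F : ℕ → EuclideanSpace ℝ (Fin d) → ℝ)
    (hF : ∀ t ∈ Finset.Icc 1 T, ConvexOn ℝ Set.univ (F t))
    (w : ℕ → EuclideanSpace ℝ (Fin d))
    (hwmem : ∀ t ∈ Finset.Icc 1 T, w t ∈ W)
    (hwopt : ∀ t ∈ Finset.Icc 1 T, ∀ v ∈ W,
      F t (w t) + (1 / (2 * η)) * ‖w t - w (t - 1)‖ ^ 2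
        ≤ F t v + (1 / (2 * η)) * ‖v - w (t - 1)‖ ^ 2)
    (u : ℕ → EuclideanSpace ℝ (Fin d))
    (hu : ∀ t ∈ Finset.Icc 1 T, u t ∈ W) :
    ∑ t ∈ Finset.Icc 1 T, (F t (w t) - F t (u t))
      ≤ (1 / (2 * η)) * ‖u 1 - w 0‖ ^ 2
        + (1 / (2 * η)) * ∑ t ∈ Finset.Icc 2 T,
            (‖u t - w (t - 1)‖ ^ 2 - ‖u (t - 1) - w (t - 1)‖ ^ 2) := by
  set c : ℝ := 1 / (2 * η)
  have hc : 0 ≤ c := by positivity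
  have hstep : ∀ t ∈ Icc 1 T, F t (w t) - F t (u t)
      ≤ c * (‖u t - w (t - 1)‖ ^ 2 - ‖u t - w t‖ ^ 2) := by
    intro t ht
    have h3 := prox_three_point hWconv ((hF t ht).subset (Set.subset_univ W) hWconv)
      (hwmem t ht) (hwopt t ht) (hu t ht)
    nlinarith [norm_nonneg (w t - w (t - 1))]
  calc ∑ t ∈ Icc 1 T, (F t (w t) - F t (u t))
      ≤ c * ∑ t ∈ Icc 1 T, (‖u t - w (t - 1)‖ ^ 2 - ‖u t - w t‖ ^ 2) := by
        rw [mul_sum]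
        exact sum_le_sum hstep
    _ ≤ c * (‖u 1 - w (1 - 1)‖ ^ 2 + ∑ t ∈ Icc 2 T,
          (‖u t - w (t - 1)‖ ^ 2 - ‖u (t - 1) - w (t - 1)‖ ^ 2)) :=
        mul_le_mul_of_nonneg_left (sum_Icc_sub_le_telescope (by positivity) (by positivity)) hc
    _ = _ := by rw [Nat.sub_self, mul_add]

/-- Intermediate dynamic regret bound with the sum of squared-distance differences
on the right-hand side. -/
theorem dynamic_regret_sq_dist_form
    {d : ℕ} (W : Set (EuclideanSpace ℝ (Fin d)))
    (hWne : W.Nonempty) (hWclosed : IsClosed W) (hWconv : Convex ℝ W)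
    (D : ℝ) (hD : ∀ w ∈ W, ∀ w' ∈ W, ‖w - w'‖ ≤ D)
    (η : ℝ) (hη : 0 < η)
    (T : ℕ)
    (F : ℕ → EuclideanSpace ℝ (Fin d) → ℝ)
    (hF : ∀ t ∈ Finset.Icc 1 T, ConvexOn ℝ Set.univ (F t))
    (w : ℕ → EuclideanSpace ℝ (Fin d))
    (hw0 : w 0 ∈ W)
    (hwmem : ∀ t ∈ Finset.Icc 1 T, w t ∈ W)
    (hwopt : ∀ t ∈ Finset.Icc 1 T, ∀ v ∈ W,
      F t (w t) + (1 / (2 * η)) * ‖w t - w (t - 1)‖ ^ 2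
        ≤ F t v + (1 / (2 * η)) * ‖v - w (t - 1)‖ ^ 2)
    (u : ℕ → EuclideanSpace ℝ (Fin d))
    (hu : ∀ t ∈ Finset.Icc 1 T, u t ∈ W) :
    ∑ t ∈ Finset.Icc 1 T, (F t (w t) - F t (u t))
      ≤ (1 / (2 * η)) * ‖u 1 - w 0‖ ^ 2
        + (1 / (2 * η)) * ∑ t ∈ Finset.Icc 2 T,
            (‖u t - w (t - 1)‖ ^ 2 - ‖u (t - 1) - w (t - 1)‖ ^ 2) :=
  dynamic_regret_sq_dist_form_general W hWconv η hη T F hF w hwmem hwopt u hu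
end
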